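/- Let $\mathcal{D}$ be a nonzero integer, $r \geq 1$ an integer, and $\kappa \in \{0, 1\}$. Then for all $x \geq 1$ and $\varepsilon > 0$, $\sum_{q \leq x,\; q \mid (2\mathcal{D})^{\infty}} q^{-\kappa/2} (q^r, \mathcal{D})^{1/2} \ll_{\varepsilon} |\mathcal{D}|^{1/2 - \kappa/(2r) + \varepsilon} x^{\varepsilon}$, where $(q^r, \mathcal{D})$ denotes $\gcd(q^r, \mathcal{D})$ and $q \mid (2\mathcal{D})^{\infty}$ means all prime factors of $q$ divide $2\mathcal{D}$. -/

import Mathlib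

/-- The completely multiplicative function `n ↦ n ^ (-ε)` as a monoid hom. -/
noncomputable def rpowNegHom (ε : ℝ) : ℕ →* ℝ where
  toFun n := (n : ℝ) ^ (-ε)
  map_one' := by simp
  map_mul' m n := by
    push_cast
    rw [Real.mul_rpow (by positivity) (by positivity)]

/-- Rankin-type bound for the Euler factor product over primes dividing `n`. -/
lemma euler_factor_prod_le (ε : ℝ) (hε : 0 < ε) :
    ∃ C : ℝ, 0 ≤ C ∧ ∀ n : ℕ, n ≠ 0 →
      ∏ p ∈ n.primeFactors, (1 - (p : ℝ) ^ (-ε))⁻¹ ≤ C * (n : ℝ) ^ ε := by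
  classical
  set B : ℕ := ⌈(2 : ℝ) ^ (1 / ε)⌉₊ + 1 with hB
  have hc2 : (2 : ℝ) ^ (-ε) < 1 :=
    Real.rpow_lt_one_of_one_lt_of_neg (by norm_num) (by linarith)
  have hc2' : (0 : ℝ) < 1 - (2 : ℝ) ^ (-ε) := by linarith
  set c : ℝ := (1 - (2 : ℝ) ^ (-ε))⁻¹ with hcdef
  have hc0 : 0 < c := by positivity
  have hc1 : 1 ≤ c := by
    rw [hcdef]
    rw [le_inv_comm₀ one_pos hc2']
    have h0 : (0 : ℝ) < (2 : ℝ) ^ (-ε) := by positivity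
    simp only [inv_one]
    linarith
  refine ⟨c ^ B, by positivity, fun n hn => ?_⟩
  have key : ∀ p ∈ n.primeFactors,
      (1 - (p : ℝ) ^ (-ε))⁻¹ ≤ (if p < B then c else 1) * (p : ℝ) ^ ε := by
    intro p hp
    have hpp : p.Prime := Nat.prime_of_mem_primeFactors hp
    have hp2 : (2 : ℝ) ≤ (p : ℝ) := by exact_mod_cast hpp.two_le
    have hp0 : (0 : ℝ) < (p : ℝ) := by linarith
    have hple : (p : ℝ) ^ (-ε) ≤ (2 : ℝ) ^ (-ε) := by
      rw [Real.rpow_neg hp0.le, Real.rpow_neg (by norm_num : (0:ℝ) ≤ 2)]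
      exact inv_anti₀ (by positivity) (Real.rpow_le_rpow (by norm_num) hp2 hε.le)
    have hpneg0 : (0 : ℝ) < (p : ℝ) ^ (-ε) := by positivity
    have hppos : (0 : ℝ) < 1 - (p : ℝ) ^ (-ε) := by linarith
    have hpe1 : (1 : ℝ) ≤ (p : ℝ) ^ ε := by
      calc (1 : ℝ) = (1 : ℝ) ^ ε := (Real.one_rpow ε).symm
        _ ≤ (p : ℝ) ^ ε := Real.rpow_le_rpow (by norm_num) (by linarith) hε.le
    by_cases hlt : p < B
    · simp only [hlt, if_true]
      calc (1 - (p : ℝ) ^ (-ε))⁻¹ ≤ (1 - (2 : ℝ) ^ (-ε))⁻¹ := by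
            apply inv_anti₀ hc2'
            linarith
        _ = c * 1 := by rw [hcdef, mul_one]
        _ ≤ c * (p : ℝ) ^ ε := by
            apply mul_le_mul_of_nonneg_left hpe1 hc0.le
    · simp only [hlt, if_false, one_mul]
      -- here p ≥ B > 2^(1/ε), so p^ε ≥ 2
      have hpB : (B : ℝ) ≤ (p : ℝ) := by exact_mod_cast Nat.le_of_not_lt hlt
      have hB2 : (2 : ℝ) ^ (1 / ε) ≤ (B : ℝ) := by
        rw [hB]
        push_cast
        have := Nat.le_ceil ((2 : ℝ) ^ (1 / ε))
        linarith
      have h2p : (2 : ℝ) ≤ (p : ℝ) ^ ε := by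
        have h1 : ((2 : ℝ) ^ (1 / ε)) ^ ε ≤ (p : ℝ) ^ ε :=
          Real.rpow_le_rpow (by positivity) (le_trans hB2 hpB) hε.le
        have h2 : ((2 : ℝ) ^ (1 / ε)) ^ ε = 2 := by
          rw [← Real.rpow_mul (by norm_num)]
          rw [one_div_mul_cancel hε.ne']
          exact Real.rpow_one 2
        linarith
      rw [inv_le_comm₀ hppos (by positivity)]
      have hinv : ((p : ℝ) ^ ε)⁻¹ ≤ 2⁻¹ := by
        apply inv_anti₀ (by norm_num) h2p
      have hneg : (p : ℝ) ^ (-ε) = ((p : ℝ) ^ ε)⁻¹ := by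
        rw [Real.rpow_neg hp0.le]
      rw [hneg]
      linarith
  calc ∏ p ∈ n.primeFactors, (1 - (p : ℝ) ^ (-ε))⁻¹
      ≤ ∏ p ∈ n.primeFactors, (if p < B then c else 1) * (p : ℝ) ^ ε := by
        apply Finset.prod_le_prod
        · intro p hp
          have hpp : p.Prime := Nat.prime_of_mem_primeFactors hp
          have hp2 : (2 : ℝ) ≤ (p : ℝ) := by exact_mod_cast hpp.two_le
          have hp0 : (0 : ℝ) < (p : ℝ) := by linarith
          have hple : (p : ℝ) ^ (-ε) ≤ (2 : ℝ) ^ (-ε) := by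
            rw [Real.rpow_neg hp0.le, Real.rpow_neg (by norm_num : (0:ℝ) ≤ 2)]
            exact inv_anti₀ (by positivity) (Real.rpow_le_rpow (by norm_num) hp2 hε.le)
          have : (0 : ℝ) < 1 - (p : ℝ) ^ (-ε) := by linarith
          positivity
        · exact key
    _ = (∏ p ∈ n.primeFactors, (if p < B then c else 1)) *
          ∏ p ∈ n.primeFactors, (p : ℝ) ^ ε := Finset.prod_mul_distrib
    _ ≤ c ^ B * (n : ℝ) ^ ε := by
        apply mul_le_mul
        · -- product of the ifs
          calc ∏ p ∈ n.primeFactors, (if p < B then c else 1)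
              ≤ ∏ _p ∈ n.primeFactors.filter (· < B), c := by
                rw [← Finset.prod_filter]
            _ = c ^ (n.primeFactors.filter (· < B)).card := Finset.prod_const c
            _ ≤ c ^ B := by
                apply pow_le_pow_right₀ hc1
                calc (n.primeFactors.filter (· < B)).card
                    ≤ (Finset.range B).card := by
                      apply Finset.card_le_card
                      intro p hp
                      rw [Finset.mem_range]
                      exact (Finset.mem_filter.mp hp).2
                  _ = B := Finset.card_range B
        · calc ∏ p ∈ n.primeFactors, (p : ℝ) ^ ε
              = (∏ p ∈ n.primeFactors, (p : ℝ)) ^ ε :=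
                Real.finset_prod_rpow _ _ (fun p _ => by positivity) ε
            _ ≤ (n : ℝ) ^ ε := by
                apply Real.rpow_le_rpow
                · positivity
                · have hdvd := Nat.prod_primeFactors_dvd n
                  have h := Nat.le_of_dvd (Nat.pos_of_ne_zero hn) hdvd
                  rw [← Nat.cast_prod]
                  exact_mod_cast h
                · exact hε.le
        · apply Finset.prod_nonneg
          intro p _
          positivity
        · positivity

lemma term_le {r κ : ℕ} (hr : 1 ≤ r) (hκr : κ ≤ r) {q : ℕ} (hq : 1 ≤ q) {g : ℕ}
    (hg : 1 ≤ g) (hgq : g ≤ q ^ r) {Dr : ℝ} (hgD : (g : ℝ) ≤ Dr) :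
    (q : ℝ) ^ (-(κ : ℝ) / 2) * (g : ℝ) ^ ((1 : ℝ) / 2)
      ≤ Dr ^ ((1 : ℝ) / 2 - (κ : ℝ) / (2 * (r : ℝ))) := by
  have hr0 : (0 : ℝ) < (r : ℝ) := by exact_mod_cast hr
  have hq0 : (0 : ℝ) < (q : ℝ) := by exact_mod_cast hq
  have hg0 : (0 : ℝ) < (g : ℝ) := by exact_mod_cast hg
  set a : ℝ := (κ : ℝ) / (2 * (r : ℝ)) with ha_def
  have ha : 0 ≤ a := by positivity
  have ha2 : a ≤ 1 / 2 := by
    rw [ha_def, div_le_iff₀ (by positivity)]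
    have hκr' : (κ : ℝ) ≤ (r : ℝ) := by exact_mod_cast hκr
    linarith
  have split : (g : ℝ) ^ ((1 : ℝ) / 2) = (g : ℝ) ^ a * (g : ℝ) ^ ((1 : ℝ) / 2 - a) := by
    rw [← Real.rpow_add hg0]
    ring_nf
  have h1 : (g : ℝ) ^ a ≤ (q : ℝ) ^ ((κ : ℝ) / 2) := by
    have hgq' : (g : ℝ) ≤ (q : ℝ) ^ (r : ℕ) := by exact_mod_cast hgq
    calc (g : ℝ) ^ a ≤ ((q : ℝ) ^ (r : ℕ)) ^ a :=
          Real.rpow_le_rpow hg0.le hgq' ha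
      _ = ((q : ℝ) ^ ((r : ℕ) : ℝ)) ^ a := by rw [Real.rpow_natCast]
      _ = (q : ℝ) ^ (((r : ℕ) : ℝ) * a) := (Real.rpow_mul hq0.le _ _).symm
      _ = (q : ℝ) ^ ((κ : ℝ) / 2) := by
          congr 1
          rw [ha_def]
          field_simp
  have h2 : (g : ℝ) ^ ((1 : ℝ) / 2 - a) ≤ Dr ^ ((1 : ℝ) / 2 - a) :=
    Real.rpow_le_rpow hg0.le hgD (by linarith)
  calc (q : ℝ) ^ (-(κ : ℝ) / 2) * (g : ℝ) ^ ((1 : ℝ) / 2)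
      = (q : ℝ) ^ (-(κ : ℝ) / 2) * ((g : ℝ) ^ a * (g : ℝ) ^ ((1 : ℝ) / 2 - a)) := by
        rw [split]
    _ ≤ (q : ℝ) ^ (-(κ : ℝ) / 2) * ((q : ℝ) ^ ((κ : ℝ) / 2) * Dr ^ ((1 : ℝ) / 2 - a)) := by
        apply mul_le_mul_of_nonneg_left _ (by positivity)
        apply mul_le_mul h1 h2 (by positivity) (by positivity)
    _ = Dr ^ ((1 : ℝ) / 2 - a) := by
        rw [← mul_assoc, ← Real.rpow_add hq0]
        have : -(κ : ℝ) / 2 + (κ : ℝ) / 2 = 0 := by ring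
        rw [this, Real.rpow_zero, one_mul]

open Classical in
theorem smooth_support_gcd_sum_bound (r : ℕ) (hr : 1 ≤ r) (κ : ℕ) (hκ : κ = 0 ∨ κ = 1)
    (ε : ℝ) (hε : 0 < ε) :
    ∃ K : ℝ, ∀ D : ℤ, D ≠ 0 → ∀ x : ℝ, 1 ≤ x →
      ∑ q ∈ (Finset.Icc 1 ⌊x⌋₊).filter
          (fun q : ℕ => ∀ p : ℕ, p.Prime → p ∣ q → (p : ℤ) ∣ 2 * D),
        (q : ℝ) ^ (-(κ : ℝ) / 2) * (Nat.gcd (q ^ r) D.natAbs : ℝ) ^ ((1 : ℝ) / 2)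
      ≤ K * (|D| : ℝ) ^ ((1 : ℝ) / 2 - (κ : ℝ) / (2 * r) + ε) * x ^ ε := by
  obtain ⟨C, hC0, hC⟩ := euler_factor_prod_le ε hε
  refine ⟨C * (2 : ℝ) ^ ε, fun D hD x hx => ?_⟩
  set n : ℕ := (2 * D).natAbs with hn_def
  have hn : n ≠ 0 := by
    simp only [hn_def, ne_eq, Int.natAbs_eq_zero]
    intro h
    apply hD
    omega
  set P : Finset ℕ := n.primeFactors with hP_def
  set Dr : ℝ := ((|D| : ℤ) : ℝ) with hDr_def
  have hDr1 : (1 : ℝ) ≤ Dr := by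
    rw [hDr_def]
    exact_mod_cast Int.one_le_abs (by exact_mod_cast hD)
  have hDr0 : (0 : ℝ) < Dr := by linarith
  have hDrabs : Dr = (D.natAbs : ℝ) := by
    rw [hDr_def, Nat.cast_natAbs, Int.cast_abs]
  set S := (Finset.Icc 1 ⌊x⌋₊).filter
      (fun q : ℕ => ∀ p : ℕ, p.Prime → p ∣ q → (p : ℤ) ∣ 2 * D) with hS_def
  set E : ℝ := (1 : ℝ) / 2 - (κ : ℝ) / (2 * r) with hE_def
  have hκr : κ ≤ r := by rcases hκ with h | h <;> omega
  -- each q in S lies in the factored numbers of P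
  have hSfac : ∀ q ∈ S, q ∈ Nat.factoredNumbers P := by
    intro q hq
    rw [Nat.mem_factoredNumbers']
    intro p hp hpq
    rw [hS_def, Finset.mem_filter] at hq
    have hdvd : (p : ℤ) ∣ 2 * D := hq.2 p hp hpq
    rw [hP_def, Nat.mem_primeFactors]
    exact ⟨hp, Int.natCast_dvd.mp hdvd, hn⟩
  have hSx : ∀ q ∈ S, 1 ≤ q ∧ (q : ℝ) ≤ x := by
    intro q hq
    rw [hS_def, Finset.mem_filter, Finset.mem_Icc] at hq
    refine ⟨hq.1.1, ?_⟩
    calc (q : ℝ) ≤ (⌊x⌋₊ : ℝ) := by exact_mod_cast hq.1.2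
      _ ≤ x := Nat.floor_le (by linarith)
  -- termwise bound
  have hterm : ∀ q ∈ S,
      (q : ℝ) ^ (-(κ : ℝ) / 2) * (Nat.gcd (q ^ r) D.natAbs : ℝ) ^ ((1 : ℝ) / 2)
        ≤ Dr ^ E * ((q : ℝ) ^ (-ε) * x ^ ε) := by
    intro q hq
    obtain ⟨hq1, hqx⟩ := hSx q hq
    have hq0 : (0 : ℝ) < (q : ℝ) := by exact_mod_cast hq1
    have hq0' : 0 < q := hq1
    have hDabs : 0 < D.natAbs := Int.natAbs_pos.mpr hD
    set g := Nat.gcd (q ^ r) D.natAbs with hg_def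
    have hg1 : 1 ≤ g := Nat.gcd_pos_of_pos_right _ hDabs
    have hgq : g ≤ q ^ r := Nat.le_of_dvd (Nat.pow_pos hq0') (Nat.gcd_dvd_left _ _)
    have hgD : (g : ℝ) ≤ Dr := by
      rw [hDrabs]
      exact_mod_cast Nat.le_of_dvd hDabs (Nat.gcd_dvd_right _ _)
    have h1 := term_le hr hκr hq1 hg1 hgq hgD
    have hfac : (1 : ℝ) ≤ (q : ℝ) ^ (-ε) * x ^ ε := by
      have hx1 : (q : ℝ) ^ ε ≤ x ^ ε := Real.rpow_le_rpow hq0.le hqx hε.le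
      have hqq : (q : ℝ) ^ (-ε) * (q : ℝ) ^ ε = 1 := by
        rw [← Real.rpow_add hq0]
        simp
      calc (1 : ℝ) = (q : ℝ) ^ (-ε) * (q : ℝ) ^ ε := hqq.symm
        _ ≤ (q : ℝ) ^ (-ε) * x ^ ε := by
            apply mul_le_mul_of_nonneg_left hx1 (by positivity)
    calc (q : ℝ) ^ (-(κ : ℝ) / 2) * (g : ℝ) ^ ((1 : ℝ) / 2)
        ≤ Dr ^ E := h1
      _ = Dr ^ E * 1 := (mul_one _).symm
      _ ≤ Dr ^ E * ((q : ℝ) ^ (-ε) * x ^ ε) := by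
          apply mul_le_mul_of_nonneg_left hfac (by positivity)
  -- Rankin / Euler product bound on ∑_{q ∈ S} q^(-ε)
  have hnorm : ∀ {p : ℕ}, p.Prime → ‖rpowNegHom ε p‖ < 1 := by
    intro p hp
    have hp1 : (1 : ℝ) < (p : ℝ) := by exact_mod_cast hp.one_lt
    have : rpowNegHom ε p = (p : ℝ) ^ (-ε) := rfl
    rw [this, Real.norm_eq_abs, abs_of_nonneg (by positivity)]
    exact Real.rpow_lt_one_of_one_lt_of_neg hp1 (by linarith)
  have hhs := (EulerProduct.summable_and_hasSum_factoredNumbers_prod_filter_prime_geometric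
      (f := rpowNegHom ε) hnorm P).2
  have hhs' : HasSum (Set.indicator (Nat.factoredNumbers P) (fun m => (m : ℝ) ^ (-ε)))
      (∏ p ∈ P.filter (fun p => p.Prime), (1 - (p : ℝ) ^ (-ε))⁻¹) := by
    rw [← hasSum_subtype_iff_indicator]
    exact hhs
  have hfilter : P.filter (fun p => p.Prime) = P :=
    Finset.filter_true_of_mem (fun p hp => Nat.prime_of_mem_primeFactors hp)
  have hsum_le : ∑ q ∈ S, (q : ℝ) ^ (-ε) ≤ C * (n : ℝ) ^ ε := by
    have h1 : ∑ q ∈ S, (q : ℝ) ^ (-ε)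
        = ∑ q ∈ S, Set.indicator (Nat.factoredNumbers P) (fun m => (m : ℝ) ^ (-ε)) q := by
      apply Finset.sum_congr rfl
      intro q hq
      rw [Set.indicator_of_mem (hSfac q hq)]
    have h2 := sum_le_hasSum S
      (fun q _ => Set.indicator_nonneg (fun m _ => by positivity) q) hhs'
    rw [hfilter] at h2
    calc ∑ q ∈ S, (q : ℝ) ^ (-ε)
        = ∑ q ∈ S, Set.indicator (Nat.factoredNumbers P) (fun m => (m : ℝ) ^ (-ε)) q := h1
      _ ≤ ∏ p ∈ P, (1 - (p : ℝ) ^ (-ε))⁻¹ := h2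
      _ ≤ C * (n : ℝ) ^ ε := hC n hn
  -- put everything together
  have hnD : (n : ℝ) = 2 * Dr := by
    rw [hn_def, hDr_def, Nat.cast_natAbs, Int.cast_abs]
    push_cast
    rw [abs_mul]
    norm_num
  have hx0 : (0 : ℝ) < x := by linarith
  calc ∑ q ∈ S, (q : ℝ) ^ (-(κ : ℝ) / 2) * (Nat.gcd (q ^ r) D.natAbs : ℝ) ^ ((1 : ℝ) / 2)
      ≤ ∑ q ∈ S, Dr ^ E * ((q : ℝ) ^ (-ε) * x ^ ε) := Finset.sum_le_sum hterm
    _ = Dr ^ E * x ^ ε * ∑ q ∈ S, (q : ℝ) ^ (-ε) := by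
        rw [Finset.mul_sum]
        apply Finset.sum_congr rfl
        intro q _
        ring
    _ ≤ Dr ^ E * x ^ ε * (C * (n : ℝ) ^ ε) := by
        apply mul_le_mul_of_nonneg_left hsum_le (by positivity)
    _ = Dr ^ E * x ^ ε * (C * ((2 : ℝ) ^ ε * Dr ^ ε)) := by
        rw [hnD, Real.mul_rpow (by norm_num) hDr0.le]
    _ = (C * (2 : ℝ) ^ ε) * (Dr ^ E * Dr ^ ε) * x ^ ε := by ring
    _ = (C * (2 : ℝ) ^ ε) * Dr ^ (E + ε) * x ^ ε := by
        rw [Real.rpow_add hDr0]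
    _ = (C * (2 : ℝ) ^ ε) * (|D| : ℝ) ^ ((1 : ℝ) / 2 - (κ : ℝ) / (2 * r) + ε) * x ^ ε := by
        rw [hE_def, hDr_def, Int.cast_abs]
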